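/- arXiv:2311.06947 — 4 statements merged into one kernel-verified Lean document; each statement's English description precedes it below -/
import Mathlib

section
/- Let k be a number field and let K/k be an extension of number fields of degree n (inside a fixed algebraic closure). Then λ_max(k) ≤ n · λ_max(K). -/
open scoped Classical

noncomputable section

/-- The house of an element of a number field: the maximum of `|σ(α)|` over all field
embeddings `σ : K → ℂ`. -/
def house {K : Type*} [Field K] (α : K) : ℝ :=
  ⨆ σ : K →+* ℂ, ‖σ α‖

/-- `lambdaMax K` is the largest successive minimum of `𝓞_K` with respect to the house:
the least real `λ` such that `{α ∈ 𝓞_K : ‖α‖ ≤ λ}` contains `[K:ℚ]` many `ℚ`-linearly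
independent elements. -/
def lambdaMax (K : Type*) [Field K] [NumberField K] : ℝ :=
  sInf {l : ℝ | ∃ v : Fin (Module.finrank ℚ K) → NumberField.RingOfIntegers K,
    LinearIndependent ℚ (fun i => (v i : K)) ∧ ∀ i, house (v i : K) ≤ l}

section Aux

variable {k K : Type*} [Field k] [NumberField k] [Field K] [NumberField K] [Algebra k K]

theorem house_nonneg' (α : K) : 0 ≤ house α :=
  Real.iSup_nonneg fun _ => norm_nonneg _

theorem abs_le_house' (σ : K →+* ℂ) (α : K) : ‖σ α‖ ≤ house α :=
  le_ciSup (f := fun σ : K →+* ℂ => ‖σ α‖)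
    (Set.Finite.bddAbove (Set.finite_range _)) σ

theorem house_trace_le' (α : K) :
    house (Algebra.trace k K α) ≤ (Module.finrank k K : ℝ) * house α := by
  haveI : FiniteDimensional k K := FiniteDimensional.right ℚ k K
  refine ciSup_le fun σ => ?_
  letI : Algebra k ℂ := σ.toAlgebra
  have hσ : σ (Algebra.trace k K α) = ∑ τ : K →ₐ[k] ℂ, τ α := trace_eq_sum_embeddings ℂ
  rw [hσ]
  calc ‖∑ τ : K →ₐ[k] ℂ, τ α‖ ≤ ∑ τ : K →ₐ[k] ℂ, ‖τ α‖ :=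
        norm_sum_le _ _
    _ ≤ ∑ τ : K →ₐ[k] ℂ, house α := Finset.sum_le_sum fun τ _ => abs_le_house' (τ : K →+* ℂ) α
    _ = (Fintype.card (K →ₐ[k] ℂ) : ℝ) * house α := by
        rw [Finset.sum_const, Finset.card_univ, nsmul_eq_mul]
    _ = (Module.finrank k K : ℝ) * house α := by rw [AlgHom.card]

theorem step' (l : ℝ)
    (h : ∃ v : Fin (Module.finrank ℚ K) → NumberField.RingOfIntegers K,
      LinearIndependent ℚ (fun i => (v i : K)) ∧ ∀ i, house (v i : K) ≤ l) :
    ∃ w : Fin (Module.finrank ℚ k) → NumberField.RingOfIntegers k,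
      LinearIndependent ℚ (fun i => (w i : k)) ∧
      ∀ i, house (w i : k) ≤ (Module.finrank k K : ℝ) * l := by
  obtain ⟨v, hv, hvl⟩ := h
  haveI : FiniteDimensional k K := FiniteDimensional.right ℚ k K
  haveI : Nonempty (Fin (Module.finrank ℚ K)) := ⟨⟨0, Module.finrank_pos⟩⟩
  have hspanv : Submodule.span ℚ (Set.range fun i => (v i : K)) = ⊤ :=
    hv.span_eq_top_of_card_eq_finrank (by simp)
  set T : K →ₗ[ℚ] k := (Algebra.trace k K).restrictScalars ℚ with hT
  have hTsurj : Function.Surjective T := Algebra.trace_surjective k K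
  set f : Fin (Module.finrank ℚ K) → k := fun i => T (v i : K) with hf
  have hfspan : Submodule.span ℚ (Set.range f) = ⊤ := by
    have hrange : Set.range f = T '' (Set.range fun i => (v i : K)) := by
      ext x; simp only [hf, Set.mem_range, Set.mem_image]
      constructor
      · rintro ⟨i, rfl⟩; exact ⟨(v i : K), ⟨i, rfl⟩, rfl⟩
      · rintro ⟨y, ⟨i, rfl⟩, rfl⟩; exact ⟨i, rfl⟩
    rw [hrange, ← Submodule.map_span, hspanv, Submodule.map_top]
    exact LinearMap.range_eq_top.mpr hTsurj
  obtain ⟨s, hsub, hsp, hind⟩ := exists_linearIndependent ℚ (Set.range f)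
  rw [hfspan] at hsp
  let b : Module.Basis s ℚ k := Module.Basis.mk hind (by rw [Subtype.range_coe, hsp])
  haveI : Fintype s := FiniteDimensional.fintypeBasisIndex b
  have hcard : Fintype.card s = Module.finrank ℚ k := (Module.finrank_eq_card_basis b).symm
  let e : Fin (Module.finrank ℚ k) ≃ s := (Fintype.equivFinOfCardEq hcard).symm
  have hint : ∀ j, IsIntegral ℤ ((e j : k)) := by
    intro j
    obtain ⟨i, hi⟩ := hsub (e j).2
    rw [← hi]
    exact Algebra.isIntegral_trace ((v i).isIntegral_coe)
  refine ⟨fun j => ⟨e j, hint j⟩, ?_, ?_⟩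
  · exact hind.comp e e.injective
  · intro j
    obtain ⟨i, hi⟩ := hsub (e j).2
    have hhe : house ((⟨e j, hint j⟩ : NumberField.RingOfIntegers k) : k) = house (Algebra.trace k K (v i)) := by
      show house ((e j : k)) = _
      rw [← hi]; rfl
    show house ((⟨(e j : k), hint j⟩ : NumberField.RingOfIntegers k) : k) ≤ (Module.finrank k K : ℝ) * l
    rw [hhe]
    calc house (Algebra.trace k K (v i : K)) ≤ (Module.finrank k K : ℝ) * house (v i : K) :=
          house_trace_le' _
      _ ≤ (Module.finrank k K : ℝ) * l :=
          mul_le_mul_of_nonneg_left (hvl i) (Nat.cast_nonneg _)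

theorem sK_nonempty (K : Type*) [Field K] [NumberField K] :
    ∃ l : ℝ, ∃ v : Fin (Module.finrank ℚ K) → NumberField.RingOfIntegers K,
      LinearIndependent ℚ (fun i => (v i : K)) ∧ ∀ i, house (v i : K) ≤ l := by
  haveI : Nonempty (Fin (Module.finrank ℚ K)) := ⟨⟨0, Module.finrank_pos⟩⟩
  have hc : Fintype.card (Module.Free.ChooseBasisIndex ℤ (NumberField.RingOfIntegers K))
      = Module.finrank ℚ K := by
    rw [← Module.finrank_eq_card_chooseBasisIndex, NumberField.RingOfIntegers.rank]
  let e := (Fintype.equivFinOfCardEq hc).symm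
  set v : Fin (Module.finrank ℚ K) → NumberField.RingOfIntegers K :=
    fun i => NumberField.RingOfIntegers.basis K (e i) with hv
  have hcoe : (fun i => (v i : K)) = (NumberField.integralBasis K) ∘ e := by
    funext i
    rw [Function.comp_apply, NumberField.integralBasis_apply]
  refine ⟨Finset.univ.sup' Finset.univ_nonempty (fun i => house (v i : K)), v, ?_, ?_⟩
  · rw [hcoe]
    exact (NumberField.integralBasis K).linearIndependent.comp e e.injective
  · intro i
    exact Finset.le_sup' (fun i => house (v i : K)) (Finset.mem_univ i)

end Aux

/-- **Comparison of largest minima in an extension** (Lemma 2.7): if `K/k` is an extension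
of number fields of degree `n`, then `λ_max(k) ≤ n · λ_max(K)`. -/
theorem lambdaMax_le_of_extension (k K : Type*) [Field k] [NumberField k] [Field K]
    [NumberField K] [Algebra k K] (n : ℕ) (hn : Module.finrank k K = n) :
    lambdaMax k ≤ (n : ℝ) * lambdaMax K := by
  haveI : FiniteDimensional k K := FiniteDimensional.right ℚ k K
  have hnpos : 0 < n := hn ▸ Module.finrank_pos
  have hnR : (0 : ℝ) < n := by exact_mod_cast hnpos
  set Sk := {l : ℝ | ∃ v : Fin (Module.finrank ℚ k) → NumberField.RingOfIntegers k,
    LinearIndependent ℚ (fun i => (v i : k)) ∧ ∀ i, house (v i : k) ≤ l} with hSk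
  set SK := {l : ℝ | ∃ v : Fin (Module.finrank ℚ K) → NumberField.RingOfIntegers K,
    LinearIndependent ℚ (fun i => (v i : K)) ∧ ∀ i, house (v i : K) ≤ l} with hSK
  have hSKne : SK.Nonempty := by
    obtain ⟨l, hl⟩ := sK_nonempty K
    exact ⟨l, hl⟩
  have hbdd : BddBelow Sk := by
    refine ⟨0, fun l' hl' => ?_⟩
    obtain ⟨w, _, hwl⟩ := hl'
    exact le_trans (house_nonneg' _) (hwl ⟨0, Module.finrank_pos⟩)
  have key : ∀ l ∈ SK, lambdaMax k ≤ (n : ℝ) * l := by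
    intro l hl
    refine csInf_le hbdd ?_
    have := step' (k := k) (K := K) l hl
    rw [hn] at this
    exact this
  have h2 : lambdaMax k / n ≤ sInf SK :=
    le_csInf hSKne fun l hl => (div_le_iff₀ hnR).mpr (by rw [mul_comm]; exact key l hl)
  have h3 : lambdaMax k ≤ sInf SK * n := (div_le_iff₀ hnR).mp h2
  rw [mul_comm] at h3
  exact h3
end
end

section
/- Let k be a number field of degree d = [k:ℚ] with ring of integers O_k. Then for every real H ≥ λ_max(k), the number of elements α ∈ O_k with ‖α‖ ≤ H is strictly less than (2π)^d · d! · H^d / √|Disc(k)|. -/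
open scoped Classical

noncomputable section

namespace CountAux

open NumberField NumberField.InfinitePlace NumberField.mixedEmbedding MeasureTheory Module
open scoped ENNReal NNReal Real Pointwise

variable {k : Type*} [Field k] [NumberField k]

lemma place_le_house (w : InfinitePlace k) (x : k) : w x ≤ _root_.house x := by
  rw [← InfinitePlace.mk_embedding w, InfinitePlace.apply]
  exact le_ciSup (f := fun σ : k →+* ℂ => ‖σ x‖) (Set.Finite.bddAbove
    (Set.finite_range _)) _

lemma one_le_house {x : NumberField.RingOfIntegers k} (hx : x ≠ 0) : 1 ≤ _root_.house (x : k) := by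
  by_contra hcon
  push_neg at hcon
  have h0 : ∀ w : InfinitePlace k, w (x : k) < 1 :=
    fun w => lt_of_le_of_lt (place_le_house w _) hcon
  obtain ⟨w⟩ := (inferInstance : Nonempty (InfinitePlace k))
  exact absurd (InfinitePlace.one_le_of_lt_one hx fun z _ => h0 z) (not_le.mpr (h0 w))

/-- The defining set of `lambdaMax`. -/
def lamSet (k : Type*) [Field k] [NumberField k] : Set ℝ :=
  {l : ℝ | ∃ v : Fin (Module.finrank ℚ k) → NumberField.RingOfIntegers k,
    LinearIndependent ℚ (fun i => (v i : k)) ∧ ∀ i, _root_.house (v i : k) ≤ l}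

lemma lambdaMax_eq : lambdaMax k = sInf (lamSet k) := rfl

lemma house_nonneg'' (x : k) : 0 ≤ _root_.house x :=
  Real.iSup_nonneg fun σ => norm_nonneg _

lemma lamSet_nonempty : (lamSet k).Nonempty := by
  classical
  have e : Fin (finrank ℚ k) ≃ Module.Free.ChooseBasisIndex ℤ (NumberField.RingOfIntegers k) := by
    refine Fintype.equivOfCardEq ?_
    rw [Fintype.card_fin, ← Module.finrank_eq_card_chooseBasisIndex, RingOfIntegers.rank]
  set v : Fin (finrank ℚ k) → NumberField.RingOfIntegers k :=
    fun i => RingOfIntegers.basis k (e i) with hvdef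
  refine ⟨∑ j, _root_.house (v j : k), v, ?_, fun i => ?_⟩
  · have h1 : LinearIndependent ℚ (fun i => integralBasis k (e i)) :=
      (linearIndependent_equiv e).mpr (integralBasis k).linearIndependent
    have heq : (fun i => ((v i : NumberField.RingOfIntegers k) : k))
        = fun i => integralBasis k (e i) := by
      funext i; rw [hvdef, integralBasis_apply]
    rw [heq]
    exact h1
  · exact Finset.single_le_sum (fun j _ => house_nonneg'' ((v j : k))) (Finset.mem_univ i)

lemma one_le_mem_lamSet {l : ℝ} (hl : l ∈ lamSet k) : 1 ≤ l := by
  obtain ⟨v, hv, hvl⟩ := hl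
  have hpos : 0 < finrank ℚ k := finrank_pos
  set i : Fin (finrank ℚ k) := ⟨0, hpos⟩
  have hne : v i ≠ 0 := by
    intro h
    exact hv.ne_zero i (by rw [h]; exact map_zero (algebraMap (NumberField.RingOfIntegers k) k))
  exact le_trans (one_le_house hne) (hvl i)

lemma one_le_lambdaMax : 1 ≤ lambdaMax k :=
  by
  rw [lambdaMax_eq]
  exact le_csInf lamSet_nonempty fun _ hl => one_le_mem_lamSet hl

lemma exists_indep_of_lt {H : ℝ} (h : lambdaMax k < H) :
    ∃ v : Fin (Module.finrank ℚ k) → NumberField.RingOfIntegers k,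
      LinearIndependent ℚ (fun i => (v i : k)) ∧ ∀ i, _root_.house (v i : k) ≤ H := by
  have hbdd : BddBelow (lamSet k) := ⟨1, fun _ hl => one_le_mem_lamSet hl⟩
  obtain ⟨l, hl, hlH⟩ := (csInf_lt_iff hbdd lamSet_nonempty).mp (lambdaMax_eq (k := k) ▸ h)
  obtain ⟨v, hv, hvl⟩ := hl
  exact ⟨v, hv, fun i => le_trans (hvl i) hlH.le⟩

/-- Images of a `ℚ`-basis of `k` under the mixed embedding are `ℝ`-linearly independent. -/
lemma canonical_linearIndependent {ι : Type*} [Fintype ι] (b : Basis ι ℚ k) :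
    LinearIndependent ℂ (fun i => canonicalEmbedding k (b i)) := by
  classical
  let e : (k →+* ℂ) ≃ ι :=
    Fintype.equivOfCardEq ((Embeddings.card k ℂ).trans (finrank_eq_card_basis b))
  let B := Pi.basisFun ℂ (k →+* ℂ)
  let M := B.toMatrix (fun i => canonicalEmbedding k (b (e i)))
  suffices M.det ≠ 0 by
    rw [← isUnit_iff_ne_zero, ← Basis.det_apply, ← Basis.is_basis_iff_det] at this
    exact (linearIndependent_equiv e).mp this.1
  let N := Algebra.embeddingsMatrixReindex ℚ ℂ (fun i => b (e i)) (RingHom.equivRatAlgHom k ℂ)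
  rw [show M = N.transpose by { ext : 2; rfl }]
  rw [Matrix.det_transpose, ← pow_ne_zero_iff two_ne_zero]
  convert (map_ne_zero_iff _ (algebraMap ℚ ℂ).injective).mpr
    (Algebra.discr_not_zero_of_basis ℚ b)
  rw [← Algebra.discr_reindex ℚ b e.symm]
  exact (Algebra.discr_eq_det_embeddingsMatrixReindex_pow_two ℚ ℂ
    (fun i => b (e i)) (RingHom.equivRatAlgHom k ℂ)).symm

lemma mixed_linearIndependent {ι : Type*} [Fintype ι] (b : Basis ι ℚ k) :
    LinearIndependent ℝ (fun i => mixedEmbedding k (b i)) := by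
  have h1 : LinearIndependent ℝ (fun i => canonicalEmbedding k (b i)) :=
    (canonical_linearIndependent b).restrict_scalars
      (by simpa only [Complex.real_smul, mul_one] using Complex.ofReal_injective)
  have hdisj : Disjoint (Submodule.span ℝ (Set.range (fun i => canonicalEmbedding k (b i))))
      (LinearMap.ker (commMap k)) := by
    refine Disjoint.mono_left ?_ (disjoint_span_commMap_ker k)
    rw [Submodule.span_le]
    rintro x ⟨i, rfl⟩
    exact Submodule.span_subset_span ℚ ℝ _
      (SetLike.mem_coe.mpr (canonicalEmbedding.mem_rat_span_latticeBasis k (b i)))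
  have h2 := h1.map hdisj
  have : ((commMap k) ∘ fun i => canonicalEmbedding k (b i))
      = fun i => mixedEmbedding k (b i) := by
    funext i; exact commMap_canonical_eq_mixed k (b i)
  rwa [this] at h2

/-- subadditivity of `normAtPlace` on finite sums. -/
lemma normAtPlace_sum_le (w : InfinitePlace k) {ι : Type*} (s : Finset ι)
    (f : ι → mixedSpace k) :
    normAtPlace w (∑ i ∈ s, f i) ≤ ∑ i ∈ s, normAtPlace w (f i) := by
  classical
  induction s using Finset.induction_on with
  | empty => simp
  | insert _ _ h ih =>
    rw [Finset.sum_insert h, Finset.sum_insert h]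
    exact le_trans (normAtPlace_add_le _ _ _) (by gcongr)

lemma mem_convexBodyLT_of {z : mixedSpace k} {f : InfinitePlace k → ℝ≥0}
    (h : ∀ w, normAtPlace w z < f w) : z ∈ convexBodyLT k f := by
  refine ⟨?_, ?_⟩ <;> intro w _ <;> rw [Metric.mem_ball, dist_zero_right]
  · rw [← normAtPlace_apply_of_isReal w.2]; exact h w.1
  · rw [← normAtPlace_apply_of_isComplex w.2]; exact h w.1

set_option maxHeartbeats 1000000 in
/-- The core counting estimate. -/
theorem core (d : ℕ) (hd : finrank ℚ k = d) (T : Finset (NumberField.RingOfIntegers k))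
    {H H'' : ℝ} (hH0 : 0 < H) (hHH : H < H'')
    (hT : ∀ α ∈ T, _root_.house (α : k) ≤ H)
    (v : Fin d → NumberField.RingOfIntegers k)
    (hv : LinearIndependent ℚ (fun i => (v i : k)))
    (hvH : ∀ i, _root_.house (v i : k) ≤ H'') :
    (T.card : ℝ≥0∞) * volume (ZSpan.fundamentalDomain (latticeBasis k))
      ≤ volume (convexBodyLT k (fun _ => ((1 + (d : ℝ)/2) * H'').toNNReal)) := by
  classical
  have hH''0 : (0:ℝ) < H'' := lt_trans hH0 hHH
  have hdpos : 0 < d := hd ▸ finrank_pos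
  have hne0 : Nonempty (Fin d) := ⟨⟨0, hdpos⟩⟩
  have hcard : Fintype.card (Fin d) = finrank ℚ k := by rw [Fintype.card_fin, hd]
  let bv : Basis (Fin d) ℚ k := basisOfLinearIndependentOfCardEqFinrank hv hcard
  have hbv : ∀ i, bv i = (v i : k) := fun i =>
    congrFun (coe_basisOfLinearIndependentOfCardEqFinrank hv hcard) i
  have hliR : LinearIndependent ℝ (fun i => mixedEmbedding k (bv i)) :=
    mixed_linearIndependent bv
  have hcard2 : Fintype.card (Fin d) = finrank ℝ (mixedSpace k) := by
    rw [Fintype.card_fin, mixedEmbedding.finrank, hd]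
  let bR : Basis (Fin d) ℝ (mixedSpace k) := basisOfLinearIndependentOfCardEqFinrank hliR hcard2
  have hbR : ∀ i, bR i = mixedEmbedding k (bv i) := fun i =>
    congrFun (coe_basisOfLinearIndependentOfCardEqFinrank hliR hcard2) i
  set B₀ := latticeBasis k with hB₀
  set D₀ := ZSpan.fundamentalDomain B₀ with hD₀def
  set L : Submodule ℤ (mixedSpace k) := Submodule.span ℤ (Set.range B₀) with hLdef
  set L' : Submodule ℤ (mixedSpace k) := Submodule.span ℤ (Set.range bR) with hL'def
  have hmemL : ∀ α : NumberField.RingOfIntegers k, mixedEmbedding k (α : k) ∈ L := fun α =>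
    (mem_span_latticeBasis k).mpr (LinearMap.mem_range.mpr ⟨α, rfl⟩)
  have hL'L : L' ≤ L := by
    rw [hL'def, Submodule.span_le]
    rintro x ⟨i, rfl⟩
    rw [hbR, hbv]
    exact hmemL (v i)
  set Dc : Set (mixedSpace k) := {x | ∀ i, bR.repr x i ∈ Set.Ico (-(2⁻¹:ℝ)) 2⁻¹} with hDcdef
  have hDcMeas : MeasurableSet Dc := by
    have h1 : Dc = ⋂ i, (fun x => bR.repr x i) ⁻¹' (Set.Ico (-(2⁻¹:ℝ)) 2⁻¹) := by
      ext x; simp [hDcdef, Set.mem_iInter]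
    rw [h1]
    refine MeasurableSet.iInter fun i => ?_
    have hcont : Continuous (fun x : mixedSpace k => bR.repr x i) := by
      have : (fun x : mixedSpace k => bR.repr x i) = bR.coord i := by
        funext x; rw [Basis.coord_apply]
      rw [this]
      exact LinearMap.continuous_of_finiteDimensional _
    exact hcont.measurable measurableSet_Ico
  -- existence of a reduction mod L' into Dc
  set c : mixedSpace k := ∑ i, (2⁻¹:ℝ) • bR i with hcdef
  have hcrepr : ∀ j, bR.repr c j = 2⁻¹ := by
    intro j
    rw [hcdef, map_sum]
    rw [Finset.sum_apply']
    rw [Finset.sum_eq_single j]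
    · rw [_root_.map_smul, Basis.repr_self, Finsupp.smul_apply, Finsupp.single_eq_same, smul_eq_mul,
        mul_one]
    · intro i _ hij
      rw [_root_.map_smul, Basis.repr_self, Finsupp.smul_apply, Finsupp.single_eq_of_ne' hij,
        smul_eq_mul, mul_zero]
    · intro h; exact absurd (Finset.mem_univ j) h
  have hex : ∀ x : mixedSpace k, ∃ γ : L', x - (γ : mixedSpace k) ∈ Dc := by
    intro x
    refine ⟨ZSpan.floor bR (x + c), fun i => ?_⟩
    rw [map_sub, Finsupp.sub_apply, ZSpan.repr_floor_apply, map_add, Finsupp.add_apply, hcrepr]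
    constructor
    · have := Int.floor_le (bR.repr x i + 2⁻¹); linarith
    · have := Int.lt_floor_add_one (bR.repr x i + 2⁻¹); linarith
  have hint : ∀ (γ : mixedSpace k), γ ∈ L' → ∀ i, ∃ n : ℤ, bR.repr γ i = (n:ℝ) := by
    intro γ hγ i
    refine ⟨⌊bR.repr γ i⌋, ?_⟩
    have h1 := ZSpan.repr_floor_apply bR γ i
    rw [ZSpan.floor_eq_self_of_mem bR γ hγ] at h1
    exact h1
  have huniq : ∀ (x γ γ' : mixedSpace k), γ ∈ L' → γ' ∈ L' →
      x - γ ∈ Dc → x - γ' ∈ Dc → γ = γ' := by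
    intro x γ γ' hγ hγ' h1 h2
    have hco : ∀ i, bR.repr γ i = bR.repr γ' i := by
      intro i
      obtain ⟨n, hn⟩ := hint γ hγ i
      obtain ⟨m, hm⟩ := hint γ' hγ' i
      have e1 := h1 i
      have e2 := h2 i
      rw [map_sub, Finsupp.sub_apply, hn, Set.mem_Ico] at e1
      rw [map_sub, Finsupp.sub_apply, hm, Set.mem_Ico] at e2
      rw [hn, hm]
      have hlt1 : ((n - m : ℤ) : ℝ) < 1 := by push_cast; linarith [e1.1, e1.2, e2.1, e2.2]
      have hlt2 : (-1 : ℝ) < ((n - m : ℤ) : ℝ) := by push_cast; linarith [e1.1, e1.2, e2.1, e2.2]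
      have : n - m = 0 := by
        have a1 : n - m < 1 := by exact_mod_cast hlt1
        have a2 : -1 < n - m := by exact_mod_cast hlt2
        omega
      have : n = m := by omega
      rw [this]
    have hrepr : bR.repr γ = bR.repr γ' := Finsupp.ext hco
    exact bR.repr.injective hrepr
  have hD0meas : MeasurableSet D₀ := ZSpan.fundamentalDomain_measurableSet B₀
  have hD0uniq : ∀ a ∈ D₀, ∀ b ∈ D₀, a - b ∈ L → a = b := by
    intro a ha b hb hab
    obtain ⟨u, _, huniq2⟩ := ZSpan.exist_unique_vadd_mem_fundamentalDomain B₀ b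
    have h1 : ((⟨a - b, hab⟩ : L) : mixedSpace k) +ᵥ b ∈ D₀ := by
      simpa [vadd_eq_add, sub_add_cancel] using ha
    have h2 : ((0 : L) : mixedSpace k) +ᵥ b ∈ D₀ := by simpa [vadd_eq_add] using hb
    have h3 := (huniq2 ⟨a - b, hab⟩ h1).trans (huniq2 0 h2).symm
    have h4 : a - b = 0 := congrArg Subtype.val h3
    exact sub_eq_zero.mp h4
  -- the pieces
  set ι0 : NumberField.RingOfIntegers k → mixedSpace k := fun α => mixedEmbedding k (α : k)
    with hι0def
  set P : NumberField.RingOfIntegers k → L' → Set (mixedSpace k) :=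
    fun α γ => (ι0 α - (γ : mixedSpace k)) +ᵥ (D₀ ∩ ((γ : mixedSpace k) +ᵥ Dc)) with hPdef
  have hPmem : ∀ (α : NumberField.RingOfIntegers k) (γ : L') (z : mixedSpace k),
      z ∈ P α γ ↔ (z - ι0 α + (γ : mixedSpace k) ∈ D₀ ∧ z - ι0 α ∈ Dc) := by
    intro α γ z
    have e1 : -(ι0 α - (γ : mixedSpace k)) +ᵥ z = z - ι0 α + (γ : mixedSpace k) := by
      simp only [vadd_eq_add]; abel
    have e2 : -(γ : mixedSpace k) +ᵥ (z - ι0 α + (γ : mixedSpace k)) = z - ι0 α := by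
      simp only [vadd_eq_add]; abel
    rw [hPdef]
    rw [Set.mem_vadd_set_iff_neg_vadd_mem, e1, Set.mem_inter_iff,
      Set.mem_vadd_set_iff_neg_vadd_mem, e2]
  have hkey : ∀ (α β : NumberField.RingOfIntegers k) (γ γ' : L') (z : mixedSpace k),
      z ∈ P α γ → z ∈ P β γ' → α = β ∧ γ = γ' := by
    intro α β γ γ' z h1 h2
    rw [hPmem] at h1 h2
    obtain ⟨h1a, h1b⟩ := h1
    obtain ⟨h2a, h2b⟩ := h2
    have hab : (z - ι0 α + (γ : mixedSpace k)) - (z - ι0 β + (γ' : mixedSpace k)) ∈ L := by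
      have heq : (z - ι0 α + (γ : mixedSpace k)) - (z - ι0 β + (γ' : mixedSpace k))
          = (ι0 β - ι0 α) + ((γ : mixedSpace k) - (γ' : mixedSpace k)) := by abel
      rw [heq]
      exact Submodule.add_mem L (Submodule.sub_mem L (hmemL β) (hmemL α))
        (Submodule.sub_mem L (hL'L γ.2) (hL'L γ'.2))
    have hab' : z - ι0 α + (γ : mixedSpace k) = z - ι0 β + (γ' : mixedSpace k) :=
      hD0uniq _ h1a _ h2a hab
    have hγγ' : (γ : mixedSpace k) = (γ' : mixedSpace k) := by
      refine huniq (z - ι0 α + (γ : mixedSpace k)) γ γ' γ.2 γ'.2 ?_ ?_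
      · have e3 : (z - ι0 α + (γ : mixedSpace k)) - (γ : mixedSpace k) = z - ι0 α := by abel
        rw [e3]; exact h1b
      · have e4 : (z - ι0 α + (γ : mixedSpace k)) - (γ' : mixedSpace k) = z - ι0 β := by
          rw [hab']; abel
        rw [e4]; exact h2b
    refine ⟨?_, Subtype.ext hγγ'⟩
    rw [hγγ'] at hab'
    have h5 : z - ι0 α = z - ι0 β := add_right_cancel hab'
    have h6 : ι0 α = ι0 β := sub_right_injective h5
    have h7 : (α : k) = (β : k) := mixedEmbedding_injective k h6
    exact RingOfIntegers.coe_injective h7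
  have hPm : ∀ α γ, MeasurableSet (P α γ) := fun α γ =>
    ((hD0meas.inter (hDcMeas.const_vadd _)).const_vadd _)
  have hPvol : ∀ α γ, volume (P α γ) = volume (D₀ ∩ ((γ : mixedSpace k) +ᵥ Dc)) :=
    fun α γ => measure_vadd _ _ _
  have hmemvadd : ∀ (γ : L') (a : mixedSpace k),
      a ∈ (γ : mixedSpace k) +ᵥ Dc ↔ a - (γ : mixedSpace k) ∈ Dc := by
    intro γ a
    rw [Set.mem_vadd_set_iff_neg_vadd_mem, vadd_eq_add, neg_add_eq_sub]
  have hQvol : ∀ α : NumberField.RingOfIntegers k, volume (⋃ γ : L', P α γ) = volume D₀ := by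
    intro α
    have hdisjγ : Pairwise (Function.onFun Disjoint (fun γ : L' => P α γ)) := by
      intro γ γ' hne
      rw [Function.onFun, Set.disjoint_left]
      intro z hz hz'
      exact hne (hkey α α γ γ' z hz hz').2
    rw [measure_iUnion hdisjγ (fun γ => hPm α γ)]
    rw [tsum_congr (hPvol α)]
    have hdisj2 : Pairwise (Function.onFun Disjoint
        (fun γ : L' => D₀ ∩ ((γ : mixedSpace k) +ᵥ Dc))) := by
      intro γ γ' hne
      rw [Function.onFun, Set.disjoint_left]
      rintro a ⟨haD, haγ⟩ ⟨-, haγ'⟩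
      rw [hmemvadd] at haγ haγ'
      exact hne (Subtype.ext (huniq a γ γ' γ.2 γ'.2 haγ haγ'))
    rw [← measure_iUnion hdisj2 (fun γ => hD0meas.inter (hDcMeas.const_vadd _))]
    congr 1
    ext a
    simp only [Set.mem_iUnion]
    constructor
    · rintro ⟨γ, hγ, -⟩
      exact hγ
    · intro ha
      obtain ⟨γ, hγ⟩ := hex a
      exact ⟨γ, ha, (hmemvadd γ a).mpr hγ⟩
  have hQdisj : (T : Set (NumberField.RingOfIntegers k)).PairwiseDisjoint
      (fun α => ⋃ γ : L', P α γ) := by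
    intro α _ β _ hne
    rw [Function.onFun, Set.disjoint_left]
    intro z hz hz'
    rw [Set.mem_iUnion] at hz hz'
    obtain ⟨γ, hγ⟩ := hz
    obtain ⟨γ', hγ'⟩ := hz'
    exact hne (hkey α β γ γ' z hγ hγ').1
  have hQm : ∀ α, MeasurableSet (⋃ γ : L', P α γ) := fun α =>
    MeasurableSet.iUnion (fun γ => hPm α γ)
  have htotal : volume (⋃ α ∈ T, ⋃ γ : L', P α γ) = (T.card : ℝ≥0∞) * volume D₀ := by
    rw [measure_biUnion_finset hQdisj (fun α _ => hQm α)]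
    rw [Finset.sum_congr rfl (fun α _ => hQvol α), Finset.sum_const, nsmul_eq_mul]
  have hsub : (⋃ α ∈ T, ⋃ γ : L', P α γ)
      ⊆ convexBodyLT k (fun _ => ((1 + (d : ℝ)/2) * H'').toNNReal) := by
    intro z hz
    simp only [Set.mem_iUnion] at hz
    obtain ⟨α, hα, γ, hγ⟩ := hz
    rw [hPmem] at hγ
    obtain ⟨-, hzDc⟩ := hγ
    refine mem_convexBodyLT_of fun w => ?_
    have h1 : normAtPlace w (z - ι0 α) ≤ (d : ℝ) * (2⁻¹ * H'') := by
      calc normAtPlace w (z - ι0 α)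
          = normAtPlace w (∑ i, bR.repr (z - ι0 α) i • bR i) := by rw [bR.sum_repr]
        _ ≤ ∑ i, normAtPlace w (bR.repr (z - ι0 α) i • bR i) :=
            normAtPlace_sum_le w Finset.univ _
        _ ≤ ∑ _i : Fin d, 2⁻¹ * H'' := by
            refine Finset.sum_le_sum fun i _ => ?_
            rw [normAtPlace_smul]
            have hb : normAtPlace w (bR i) = w (v i : k) := by
              rw [hbR, hbv, normAtPlace_apply]
            rw [hb]
            have h2 : |bR.repr (z - ι0 α) i| ≤ 2⁻¹ := by
              obtain ⟨hlo, hhi⟩ := hzDc i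
              rw [abs_le]; constructor <;> linarith
            have h3 : (0:ℝ) ≤ w (v i : k) := w.1.nonneg _
            have h4 : w (v i : k) ≤ H'' := le_trans (place_le_house w _) (hvH i)
            calc |bR.repr (z - ι0 α) i| * w (v i : k) ≤ 2⁻¹ * w (v i : k) :=
                  mul_le_mul_of_nonneg_right h2 h3
              _ ≤ 2⁻¹ * H'' := by linarith
        _ = (d : ℝ) * (2⁻¹ * H'') := by
            rw [Finset.sum_const, Finset.card_univ, Fintype.card_fin, nsmul_eq_mul]
    have h2 : normAtPlace w (ι0 α) ≤ H := by
      rw [hι0def, normAtPlace_apply]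
      exact le_trans (place_le_house w _) (hT α hα)
    have h3 : normAtPlace w z ≤ H + (d : ℝ) * (2⁻¹ * H'') := by
      have e5 : z = ι0 α + (z - ι0 α) := by abel
      calc normAtPlace w z = normAtPlace w (ι0 α + (z - ι0 α)) := by rw [← e5]
        _ ≤ normAtPlace w (ι0 α) + normAtPlace w (z - ι0 α) := normAtPlace_add_le w _ _
        _ ≤ H + (d : ℝ) * (2⁻¹ * H'') := add_le_add h2 h1
    have h4 : H + (d : ℝ) * (2⁻¹ * H'') < (1 + (d : ℝ)/2) * H'' := by
      have hd0 : (0:ℝ) ≤ (d:ℝ) := Nat.cast_nonneg d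
      nlinarith
    have h5 : (((1 + (d : ℝ)/2) * H'').toNNReal : ℝ) = (1 + (d : ℝ)/2) * H'' := by
      rw [Real.coe_toNNReal]
      positivity
    calc normAtPlace w z ≤ H + (d : ℝ) * (2⁻¹ * H'') := h3
      _ < (1 + (d : ℝ)/2) * H'' := h4
      _ = (((1 + (d : ℝ)/2) * H'').toNNReal : ℝ) := h5.symm
  calc (T.card : ℝ≥0∞) * volume D₀ = volume (⋃ α ∈ T, ⋃ γ : L', P α γ) := htotal.symm
    _ ≤ volume (convexBodyLT k (fun _ => ((1 + (d : ℝ)/2) * H'').toNNReal)) :=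
        measure_mono hsub

lemma succ_pow_le (n : ℕ) (hn : 1 ≤ n) : ((n : ℝ) + 1) ^ n ≤ 3 * (n : ℝ) ^ n := by
  have hn0 : (0:ℝ) < n := by exact_mod_cast hn
  have h1 : ((n:ℝ) + 1) ≤ n * Real.exp (1/n) := by
    have := Real.add_one_le_exp (1/(n:ℝ))
    calc ((n:ℝ) + 1) = n * (1/n + 1) := by field_simp; ring
      _ ≤ n * Real.exp (1/n) := by
          exact mul_le_mul_of_nonneg_left this hn0.le
  calc ((n : ℝ) + 1) ^ n ≤ ((n:ℝ) * Real.exp (1/n)) ^ n := by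
        exact pow_le_pow_left₀ (by positivity) h1 n
    _ = (n:ℝ) ^ n * Real.exp (1/n) ^ n := mul_pow _ _ _
    _ = (n:ℝ) ^ n * Real.exp ((n : ℕ) * (1/n)) := by rw [Real.exp_nat_mul]
    _ = (n:ℝ) ^ n * Real.exp 1 := by
        congr 2
        field_simp
    _ ≤ (n:ℝ) ^ n * 3 := by
        have := Real.exp_one_lt_d9
        exact mul_le_mul_of_nonneg_left (by linarith) (by positivity)
    _ = 3 * (n : ℝ) ^ n := mul_comm _ _

lemma factLB (d : ℕ) : (d : ℝ) ^ d ≤ 3 ^ d * d.factorial := by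
  induction d with
  | zero => simp
  | succ n ih =>
    rcases Nat.eq_zero_or_pos n with rfl | hn
    · norm_num
    have h1 : ((n : ℝ) + 1) ^ n ≤ 3 * (n : ℝ) ^ n := succ_pow_le n hn
    have hfact : (Nat.factorial (n+1) : ℝ) = ((n:ℝ) + 1) * n.factorial := by
      rw [Nat.factorial_succ]; push_cast; ring
    calc ((n + 1 : ℕ) : ℝ) ^ (n + 1) = ((n:ℝ) + 1) * ((n:ℝ) + 1) ^ n := by push_cast; ring
      _ ≤ ((n:ℝ) + 1) * (3 * (n : ℝ) ^ n) := by
          exact mul_le_mul_of_nonneg_left h1 (by positivity)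
      _ ≤ ((n:ℝ) + 1) * (3 * (3 ^ n * n.factorial)) := by
          have : (3:ℝ) * (n : ℝ) ^ n ≤ 3 * (3 ^ n * n.factorial) :=
            mul_le_mul_of_nonneg_left ih (by norm_num)
          exact mul_le_mul_of_nonneg_left this (by positivity)
      _ = 3 ^ (n+1) * (Nat.factorial (n+1) : ℝ) := by rw [hfact]; ring

lemma lemC {d : ℕ} (hd : 1 ≤ d) :
    ((d : ℝ) + 2) ^ (2 * d) < (8 * π) ^ d * ((d.factorial : ℝ)) ^ 2 := by
  have hpi : (3.141592 : ℝ) < π := Real.pi_gt_d6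
  rcases Nat.lt_or_ge d 3 with h3 | h3
  · interval_cases d
    · norm_num; nlinarith
    · norm_num [Nat.factorial]; nlinarith
  · have hd3 : (3:ℝ) ≤ (d:ℝ) := by exact_mod_cast h3
    have h9 : (0:ℝ) < 9 ^ d := by positivity
    rw [← mul_lt_mul_iff_right₀ h9]
    have e1 : (9:ℝ) ^ d * ((d : ℝ) + 2) ^ (2 * d) = ((3 * ((d:ℝ) + 2)) ^ 2) ^ d := by
      rw [show ((3:ℝ) * ((d:ℝ) + 2)) ^ 2 = 9 * ((d:ℝ) + 2)^2 by ring, mul_pow, ← pow_mul]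
    have e2 : (9:ℝ) ^ d * ((8 * π) ^ d * ((d.factorial : ℝ)) ^ 2)
        = (8 * π) ^ d * ((3 ^ d * (d.factorial : ℝ))) ^ 2 := by
      rw [mul_pow ((3:ℝ)^d), ← pow_mul, show d*2 = 2*d by ring, pow_mul,
        show (3:ℝ)^2 = 9 by norm_num]; ring
    rw [e1, e2]
    calc (((3 * ((d:ℝ) + 2)) ^ 2) ^ d) ≤ ((5 * (d:ℝ)) ^ 2) ^ d := by
          apply pow_le_pow_left₀ (by positivity)
          apply pow_le_pow_left₀ (by positivity)
          linarith
      _ = (25 * (d:ℝ)^2) ^ d := by ring_nf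
      _ < (8 * π * (d:ℝ)^2) ^ d := by
          apply pow_lt_pow_left₀ ?_ (by positivity) (by omega)
          nlinarith
      _ = (8 * π) ^ d * ((d:ℝ)^d) ^ 2 := by
          rw [mul_pow, ← pow_mul, ← pow_mul, mul_comm 2 d]
      _ ≤ (8 * π) ^ d * ((3 ^ d * (d.factorial : ℝ))) ^ 2 := by
          have h1 : (0:ℝ) ≤ (d:ℝ)^d := by positivity
          have := factLB d
          have h2 : ((d:ℝ)^d)^2 ≤ ((3 ^ d * (d.factorial : ℝ)))^2 := by
            apply pow_le_pow_left₀ h1 this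
          exact mul_le_mul_of_nonneg_left h2 (by positivity)

lemma constC {d r1 r2 : ℕ} (h : r1 + 2 * r2 = d) (hd : 1 ≤ d) :
    (2 : ℝ) ^ (r1 + r2) * π ^ r2 * (1 + (d : ℝ)/2) ^ d
      < (2 * π) ^ d * (d.factorial : ℝ) := by
  have hπ : (2:ℝ) ≤ π := by linarith [Real.pi_gt_three]
  have hπ0 : (0:ℝ) < π := Real.pi_pos
  have h2d : (0:ℝ) < 2 ^ d := by positivity
  rw [← mul_lt_mul_iff_left₀ h2d]
  have hid : (1 + (d : ℝ)/2) ^ d * 2 ^ d = ((d:ℝ) + 2) ^ d := by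
    rw [← mul_pow]; congr 1; ring
  have e1 : (2:ℝ)^r1 ≤ π^r1 := pow_le_pow_left₀ (by norm_num) hπ r1
  have e2 : ((2:ℝ)^(r1+r2) * π^r2)^2 ≤ 2 ^ d * π ^ d := by
    calc ((2:ℝ)^(r1+r2) * π^r2)^2 = 2^((r1+r2)*2) * π^(r2*2) := by
          rw [mul_pow, ← pow_mul, ← pow_mul]
      _ = 2^r1 * (2^(r1+2*r2) * π^(2*r2)) := by
          rw [show (r1+r2)*2 = r1 + (r1+2*r2) by ring, pow_add,
            show r2*2 = 2*r2 by ring, mul_assoc]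
      _ ≤ π^r1 * (2^(r1+2*r2) * π^(2*r2)) := by
          have h0 : (0:ℝ) ≤ 2^(r1+2*r2) * π^(2*r2) := by positivity
          exact mul_le_mul_of_nonneg_right e1 h0
      _ = 2 ^ d * π ^ d := by rw [← h, pow_add, pow_mul]; ring
  have key := lemC hd
  have hL0 : (0:ℝ) ≤ (2 : ℝ) ^ (r1 + r2) * π ^ r2 * (1 + (d : ℝ)/2) ^ d * 2 ^ d := by positivity
  have hR0 : (0:ℝ) ≤ (2 * π) ^ d * (d.factorial : ℝ) * 2 ^ d := by positivity
  refine lt_of_pow_lt_pow_left₀ 2 hR0 ?_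
  have lhs_eq : ((2:ℝ)^(r1+r2) * π^r2 * (1 + (d : ℝ)/2) ^ d * 2 ^ d)^2
      = ((2:ℝ)^(r1+r2) * π^r2)^2 * ((d:ℝ) + 2) ^ (2*d) := by
    rw [mul_assoc ((2:ℝ)^(r1+r2) * π^r2), hid, mul_pow, ← pow_mul,
      show d*2 = 2*d by ring]
  have h8 : (8:ℝ)^d = 2^d * (2^d * 2^d) := by
    rw [show (8:ℝ) = 2*(2*2) by norm_num, mul_pow, mul_pow]
  have rhs_eq : ((2*π)^d * (d.factorial : ℝ) * 2 ^ d)^2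
      = (2^d * π^d) * ((8*π)^d * ((d.factorial : ℝ))^2) := by
    rw [mul_pow (8:ℝ) π, h8, mul_pow (2:ℝ) π]; ring
  rw [lhs_eq, rhs_eq]
  calc ((2:ℝ)^(r1+r2) * π^r2)^2 * ((d:ℝ) + 2) ^ (2*d)
      ≤ (2^d * π^d) * ((d:ℝ) + 2) ^ (2*d) := by
        exact mul_le_mul_of_nonneg_right e2 (by positivity)
    _ < (2^d * π^d) * ((8*π)^d * ((d.factorial : ℝ))^2) := by
        exact mul_lt_mul_of_pos_left key (by positivity)

end CountAux

open CountAux Module MeasureTheory NumberField.InfinitePlace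
  NumberField.mixedEmbedding
open scoped ENNReal NNReal Real

/-- **Counting integers of bounded height** (Corollary 2.10): if `k` has degree `d` and
`H ≥ λ_max(k)`, then `#{α ∈ 𝓞_k : ‖α‖ ≤ H} < (2π)^d · d! · H^d / √|Disc(k)|`. -/
theorem count_integers_bounded_house (k : Type*) [Field k] [NumberField k] (d : ℕ)
    (hd : Module.finrank ℚ k = d) (H : ℝ) (hH : lambdaMax k ≤ H) :
    ((({α : NumberField.RingOfIntegers k | house (α : k) ≤ H}).ncard : ℕ) : ℝ) <
      (2 * Real.pi) ^ d * (d.factorial : ℝ) * H ^ d /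
        Real.sqrt (|NumberField.discr k| : ℝ) := by
  have hd1 : 1 ≤ d := hd ▸ Module.finrank_pos
  have hH1 : (1 : ℝ) ≤ H := le_trans one_le_lambdaMax hH
  have hH0 : (0 : ℝ) < H := lt_of_lt_of_le one_pos hH1
  set S := {α : NumberField.RingOfIntegers k | _root_.house (α : k) ≤ H} with hS
  -- finiteness of `S`
  have hSfin : S.Finite := by
    have h1 : ((fun α : NumberField.RingOfIntegers k => (α : k)) '' S).Finite := by
      refine (NumberField.Embeddings.finite_of_norm_le k ℂ H).subset ?_
      rintro x ⟨α, hα, rfl⟩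
      refine ⟨NumberField.RingOfIntegers.isIntegral_coe α, fun φ => ?_⟩
      refine le_trans ?_ hα
      exact le_ciSup (f := fun σ : k →+* ℂ => ‖σ (α : k)‖)
        (Set.Finite.bddAbove (Set.finite_range _)) φ
    exact h1.of_finite_image (Set.injOn_of_injective NumberField.RingOfIntegers.coe_injective)
  set T := hSfin.toFinset with hTdef
  have hcardT : S.ncard = T.card := by
    exact Set.ncard_eq_toFinset_card S hSfin
  -- the main estimate, for all `H'' > H`
  set r1 := NumberField.InfinitePlace.nrRealPlaces k
  set r2 := NumberField.InfinitePlace.nrComplexPlaces k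
  have hr : r1 + 2 * r2 = d := by
    rw [← hd]; exact NumberField.InfinitePlace.card_add_two_mul_card_eq_rank k
  set X : ℝ := Real.sqrt (|NumberField.discr k| : ℝ) with hX
  have hXpos : 0 < X := by
    rw [hX]
    refine Real.sqrt_pos.mpr (abs_pos.mpr ?_)
    exact_mod_cast (Int.cast_ne_zero (α := ℝ)).mpr (NumberField.discr_ne_zero k)
  have main : ∀ H'' : ℝ, H < H'' →
      (T.card : ℝ) * X ≤ (2 : ℝ) ^ (r1 + r2) * π ^ r2 * (1 + (d : ℝ)/2) ^ d * H'' ^ d := by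
    intro H'' hHH'
    obtain ⟨v, hv, hvH⟩ := exists_indep_of_lt (lt_of_le_of_lt hH hHH')
    have hv' : LinearIndependent ℚ (fun i : Fin d => ((hd ▸ v) i : k)) := by
      subst hd; exact hv
    have hvH' : ∀ i : Fin d, _root_.house (((hd ▸ v) i : NumberField.RingOfIntegers k) : k)
        ≤ H'' := by subst hd; exact hvH
    have hT' : ∀ α ∈ T, _root_.house (α : k) ≤ H := fun α hα => hSfin.mem_toFinset.mp hα
    have hcore := core d hd T hH0 hHH' hT' (hd ▸ v) hv' hvH'
    rw [volume_fundamentalDomain_latticeBasis, convexBodyLT_volume] at hcore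
    have hprod : (∏ w : NumberField.InfinitePlace k,
        ((((1 + (d : ℝ)/2) * H'').toNNReal : ℝ≥0∞)) ^ mult w)
        = ((((1 + (d : ℝ)/2) * H'').toNNReal : ℝ≥0∞)) ^ d := by
      rw [Finset.prod_pow_eq_pow_sum, sum_mult_eq, hd]
    rw [ENNReal.coe_finset_prod] at hcore
    simp only [ENNReal.coe_pow] at hcore
    rw [hprod] at hcore
    have hfin : ((convexBodyLTFactor k : ℝ≥0∞)
        * (((1 + (d : ℝ)/2) * H'').toNNReal : ℝ≥0∞) ^ d) ≠ ⊤ :=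
      ENNReal.mul_ne_top ENNReal.coe_ne_top (ENNReal.pow_ne_top ENNReal.coe_ne_top)
    have hR := ENNReal.toReal_mono hfin hcore
    simp only [ENNReal.toReal_mul, ENNReal.toReal_pow, ENNReal.toReal_inv,
      ENNReal.toReal_ofNat, ENNReal.coe_toReal, ENNReal.toReal_natCast] at hR
    have c1 : ((NNReal.sqrt ‖NumberField.discr k‖₊ : ℝ≥0) : ℝ) = X := by
      rw [Real.coe_sqrt, hX]
      congr 1
    have c2 : ((convexBodyLTFactor k : ℝ≥0) : ℝ) = 2 ^ r1 * π ^ r2 := by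
      simp only [convexBodyLTFactor, NNReal.coe_mul, NNReal.coe_pow, NNReal.coe_ofNat,
        NNReal.coe_real_pi]
      rfl
    have hH''0 : (0:ℝ) < H'' := lt_trans hH0 hHH'
    have c3 : (((1 + (d : ℝ)/2) * H'').toNNReal : ℝ) = (1 + (d : ℝ)/2) * H'' :=
      Real.coe_toNNReal _ (mul_nonneg (by positivity) hH''0.le)
    rw [c1, c2, c3] at hR
    -- now hR : (T.card : ℝ) * (2⁻¹ ^ r2 * X) ≤ 2 ^ r1 * π ^ r2 * ((1 + d/2) * H'') ^ d
    have h2r2 : (0:ℝ) < 2 ^ r2 := by positivity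
    have hXnn : (0:ℝ) ≤ X := Real.sqrt_nonneg _
    have e0 : ((2:ℝ)⁻¹) ^ r2 * 2 ^ r2 = 1 := by
      rw [← mul_pow]; norm_num
    have e1 : ((T.card : ℝ) * ((2:ℝ)⁻¹ ^ r2 * X)) * 2 ^ r2 = (T.card : ℝ) * X := by
      calc ((T.card : ℝ) * ((2:ℝ)⁻¹ ^ r2 * X)) * 2 ^ r2
          = ((T.card : ℝ) * X) * (((2:ℝ)⁻¹) ^ r2 * 2 ^ r2) := by ring
        _ = (T.card : ℝ) * X := by rw [e0, mul_one]
    have e2 : (2 ^ r1 * π ^ r2 * ((1 + (d:ℝ)/2) * H'') ^ d) * 2 ^ r2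
        = (2 : ℝ) ^ (r1 + r2) * π ^ r2 * (1 + (d : ℝ)/2) ^ d * H'' ^ d := by
      rw [mul_pow, pow_add]; ring
    calc (T.card : ℝ) * X = ((T.card : ℝ) * ((2:ℝ)⁻¹ ^ r2 * X)) * 2 ^ r2 := e1.symm
      _ ≤ (2 ^ r1 * π ^ r2 * ((1 + (d:ℝ)/2) * H'') ^ d) * 2 ^ r2 :=
          mul_le_mul_of_nonneg_right hR h2r2.le
      _ = (2 : ℝ) ^ (r1 + r2) * π ^ r2 * (1 + (d : ℝ)/2) ^ d * H'' ^ d := e2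
  have main0 : (T.card : ℝ) * X ≤ (2 : ℝ) ^ (r1 + r2) * π ^ r2 * (1 + (d : ℝ)/2) ^ d * H ^ d := by
    have ht : Filter.Tendsto
        (fun x : ℝ => (2 : ℝ) ^ (r1 + r2) * π ^ r2 * (1 + (d : ℝ)/2) ^ d * x ^ d)
        (nhdsWithin H (Set.Ioi H))
        (nhds ((2 : ℝ) ^ (r1 + r2) * π ^ r2 * (1 + (d : ℝ)/2) ^ d * H ^ d)) :=
      ((continuous_const.mul (continuous_pow d)).tendsto H).mono_left nhdsWithin_le_nhds
    exact ge_of_tendsto ht (Filter.eventually_of_mem self_mem_nhdsWithin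
      fun x hx => main x hx)
  have hc : (2 : ℝ) ^ (r1 + r2) * π ^ r2 * (1 + (d : ℝ)/2) ^ d * H ^ d
      < (2 * π) ^ d * (d.factorial : ℝ) * H ^ d := by
    have := constC hr hd1
    have hHd : (0:ℝ) < H ^ d := pow_pos hH0 d
    exact mul_lt_mul_of_pos_right this hHd
  rw [lt_div_iff₀ hXpos]
  calc ((S.ncard : ℕ) : ℝ) * Real.sqrt (|NumberField.discr k| : ℝ)
      = (T.card : ℝ) * X := by rw [hcardT]
    _ ≤ (2 : ℝ) ^ (r1 + r2) * π ^ r2 * (1 + (d : ℝ)/2) ^ d * H ^ d := main0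
    _ < (2 * π) ^ d * (d.factorial : ℝ) * H ^ d := hc
end
end

section
/- Let N ≥ 1, let F be a nonzero polynomial in N complex variables with complex coefficients and total degree deg F, and let B_1,…,B_N be finite sets of integers with |B_i| ≥ 2·deg F for every i. Then the number of tuples (x_1,…,x_N) ∈ B_1 × ⋯ × B_N with F(x_1,…,x_N) ≠ 0 is at least 2^{−N} · ∏_{i=1}^N |B_i|. -/
/-!
Expand `F` in its first variable: its leading coefficient `G` is a nonzero polynomial in the
remaining variables with `deg_i G ≤ deg_i F`, and over every tail point where `G` does not
vanish, `F` restricts to a nonzero univariate polynomial of degree `deg_0 F`, which misses at most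
`deg_0 F` points of `B_0`. Induction on the number of variables gives at least
`∏ (|B_i| - deg_i F)` non-vanishing points, and `|B_i| - deg_i F ≥ |B_i| / 2` since
`2 deg_i F ≤ 2 deg F ≤ |B_i|`.
-/

open scoped Classical

open Finset Fintype

namespace Polynomial

variable {R : Type*} [CommRing R] [IsDomain R]

theorem card_sub_natDegree_le_card_filter_eval_ne_zero {p : R[X]} (hp : p ≠ 0) (S : Finset R) :
    #S - p.natDegree ≤ #{a ∈ S | p.eval a ≠ 0} := by
  have hroots : #{a ∈ S | p.eval a = 0} ≤ p.natDegree :=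
    card_le_degree_of_subset_roots fun a ha => by
      simpa [mem_roots hp] using (mem_filter.1 ha).2
  have := card_filter_add_card_filter_not (s := S) (fun a => p.eval a = 0)
  simp only [ne_eq]
  omega

end Polynomial

namespace Fin

theorem card_filter_piFinset_eq_sum {n : ℕ} {α : Type*} (S : Fin (n + 1) → Finset α)
    (P : (Fin (n + 1) → α) → Prop) [DecidablePred P] :
    #{x ∈ piFinset S | P x} = ∑ y ∈ piFinset (tail S), #{a ∈ S 0 | P (cons a y)} := by
  have hS := filter_piFinset_eq_map_consEquiv S (fun _ => True)
  simp only [filter_true] at hS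
  simp_rw [card_filter, hS, sum_map, sum_product_right]
  rfl

end Fin

namespace MvPolynomial

variable {R : Type*} [CommRing R] [IsDomain R]

theorem card_sub_degreeOf_zero_le_card_filter_eval_cons_ne_zero {n : ℕ}
    {p : MvPolynomial (Fin (n + 1)) R} {y : Fin n → R}
    (hy : eval y (finSuccEquiv R n p).leadingCoeff ≠ 0) (S : Finset R) :
    #S - p.degreeOf 0 ≤ #{a ∈ S | eval (Fin.cons a y) p ≠ 0} := by
  set q := (finSuccEquiv R n p).map (eval y)
  have hdeg : q.natDegree = p.degreeOf 0 := by
    rw [Polynomial.natDegree_map_of_leadingCoeff_ne_zero _ hy, natDegree_finSuccEquiv]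
  have hq : q ≠ 0 := Polynomial.leadingCoeff_ne_zero.1 <| by
    rwa [Polynomial.leadingCoeff_map_of_leadingCoeff_ne_zero _ hy]
  simpa [hdeg, q, eval_eq_eval_mv_eval'] using
    Polynomial.card_sub_natDegree_le_card_filter_eval_ne_zero hq S

theorem prod_card_sub_degreeOf_le_card_filter_eval_ne_zero {n : ℕ} {p : MvPolynomial (Fin n) R}
    (hp : p ≠ 0) (S : Fin n → Finset R) :
    ∏ i, (#(S i) - p.degreeOf i) ≤ #{x ∈ piFinset S | eval x p ≠ 0} := by
  induction n with
  | zero =>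
    rw [p.eq_C_of_isEmpty] at hp ⊢
    simp [C_ne_zero.mp hp]
  | succ n ih =>
    set G := (finSuccEquiv R n p).leadingCoeff
    have hG : G ≠ 0 := by simpa [G] using hp
    set T := {y ∈ piFinset (Fin.tail S) | eval y G ≠ 0}
    calc ∏ i, (#(S i) - p.degreeOf i)
        = (#(S 0) - p.degreeOf 0) * ∏ i : Fin n, (#(S i.succ) - p.degreeOf i.succ) :=
          Fin.prod_univ_succ _
      _ ≤ (#(S 0) - p.degreeOf 0) * ∏ i : Fin n, (#(S i.succ) - G.degreeOf i) := by
          gcongr with i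
          exact degreeOf_coeff_finSuccEquiv p i _
      _ ≤ (#(S 0) - p.degreeOf 0) * #T := Nat.mul_le_mul_left _ (ih hG _)
      _ = ∑ _y ∈ T, (#(S 0) - p.degreeOf 0) := by rw [sum_const, smul_eq_mul, mul_comm]
      _ ≤ ∑ y ∈ T, #{a ∈ S 0 | eval (Fin.cons a y) p ≠ 0} :=
          sum_le_sum fun y hy =>
            card_sub_degreeOf_zero_le_card_filter_eval_cons_ne_zero (mem_filter.1 hy).2 _
      _ ≤ ∑ y ∈ piFinset (Fin.tail S), #{a ∈ S 0 | eval (Fin.cons a y) p ≠ 0} :=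
          sum_le_sum_of_subset (filter_subset _ _)
      _ = #{x ∈ piFinset S | eval x p ≠ 0} :=
          (Fin.card_filter_piFinset_eq_sum S fun x => eval x p ≠ 0).symm

theorem prod_card_sub_degreeOf_le_card_filter_eval_comp_ne_zero {α : Type*} {n : ℕ}
    {p : MvPolynomial (Fin n) R} (hp : p ≠ 0) {f : α → R} (hf : Function.Injective f)
    (S : Fin n → Finset α) :
    ∏ i, (#(S i) - p.degreeOf i) ≤ #{x ∈ piFinset S | eval (fun i => f (x i)) p ≠ 0} := by
  have hinj : Function.Injective fun (x : Fin n → α) i => f (x i) := hf.comp_left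
  have h := prod_card_sub_degreeOf_le_card_filter_eval_ne_zero hp fun i => (S i).image f
  rw [piFinset_image, filter_image, card_image_of_injective _ hinj] at h
  simpa only [card_image_of_injective _ hf] using h

end MvPolynomial

open MvPolynomial

theorem count_tuples_avoiding_hypersurface_general (N : ℕ)
    (F : MvPolynomial (Fin N) ℂ) (hF : F ≠ 0) (B : Fin N → Finset ℤ)
    (hB : ∀ i, 2 * F.totalDegree ≤ (B i).card) :
    ((2 : ℝ) ^ N)⁻¹ * ∏ i, ((B i).card : ℝ) ≤
      ((({x : Fin N → ℤ | (∀ i, x i ∈ B i) ∧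
          MvPolynomial.eval (fun i => ((x i : ℤ) : ℂ)) F ≠ 0}).ncard : ℕ) : ℝ) := by
  have hset : {x : Fin N → ℤ | (∀ i, x i ∈ B i) ∧ eval (fun i => ((x i : ℤ) : ℂ)) F ≠ 0} =
      ↑{x ∈ piFinset B | eval (fun i => ((x i : ℤ) : ℂ)) F ≠ 0} := by
    ext x
    simp
  have half_le (i : Fin N) : ((B i).card : ℝ) / 2 ≤ (((B i).card - F.degreeOf i : ℕ) : ℝ) := by
    have h := (Nat.mul_le_mul_left 2 (degreeOf_le_totalDegree F i)).trans (hB i)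
    have h' : 2 * (F.degreeOf i : ℝ) ≤ (B i).card := by exact_mod_cast h
    rw [Nat.cast_sub (by omega)]
    linarith
  rw [hset, Set.ncard_coe_finset]
  calc ((2 : ℝ) ^ N)⁻¹ * ∏ i, ((B i).card : ℝ) = ∏ i, ((B i).card : ℝ) / 2 := by
        rw [prod_div_distrib, prod_const, card_univ, Fintype.card_fin, div_eq_inv_mul]
    _ ≤ ∏ i, (((B i).card - F.degreeOf i : ℕ) : ℝ) :=
        prod_le_prod (fun i _ => by positivity) fun i _ => half_le i
    _ ≤ _ := by
        rw [← Nat.cast_prod]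
        exact_mod_cast prod_card_sub_degreeOf_le_card_filter_eval_comp_ne_zero hF
          Int.cast_injective B

/-- **Lattice points avoiding a hypersurface** (Lemma 3.6): let `F` be a nonzero polynomial
in `N` complex variables and `B_1,…,B_N` finite sets of integers with `|B_i| ≥ 2·deg F` for
every `i`. Then the number of tuples `(x_1,…,x_N) ∈ B_1 × ⋯ × B_N` with
`F(x_1,…,x_N) ≠ 0` is at least `2^{−N} · ∏_i |B_i|`. -/
theorem count_tuples_avoiding_hypersurface (N : ℕ) (hN : 1 ≤ N)
    (F : MvPolynomial (Fin N) ℂ) (hF : F ≠ 0) (B : Fin N → Finset ℤ)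
    (hB : ∀ i, 2 * F.totalDegree ≤ (B i).card) :
    ((2 : ℝ) ^ N)⁻¹ * ∏ i, ((B i).card : ℝ) ≤
      ((({x : Fin N → ℤ | (∀ i, x i ∈ B i) ∧
          MvPolynomial.eval (fun i => ((x i : ℤ) : ℂ)) F ≠ 0}).ncard : ℕ) : ℝ) :=
  count_tuples_avoiding_hypersurface_general N F hF B hB
end

section
/- Let G ≤ S_n be a permutation group, and suppose G admits a base of size b, i.e., a subset B ⊆ {1,…,n} with |B| = b whose pointwise stabilizer in G is the trivial subgroup. Then there exist n G-invariant polynomials f_1,…,f_n ∈ ℤ[x_1,…,x_n], algebraically independent over ℚ, with max_i deg f_i ≤ (b+1)(b+2)/2. -/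
open scoped Classical

noncomputable section

namespace BaseInvAux

open MvPolynomial Finsupp Finset

variable {n b : ℕ}

/-- exponent pattern on base points: `β k` gets exponent `k+2`. -/
def ee (β : Fin b → Fin n) : Fin n →₀ ℕ := ∑ k : Fin b, Finsupp.single (β k) ((k : ℕ) + 2)

/-- exponent of the monomial `x_i * ∏ x_{β k}^{k+2}`. -/
def mm (β : Fin b → Fin n) (i : Fin n) : Fin n →₀ ℕ := Finsupp.single i 1 + ee β

/-- tail sum of exponents over base points of index `≥ k₀`. -/
def tl (β : Fin b → Fin n) (v : Fin n →₀ ℕ) (k₀ : ℕ) : ℕ :=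
  ∑ k ∈ Finset.univ.filter (fun k : Fin b => k₀ ≤ (k : ℕ)), v (β k)

/-- the weight of an exponent vector. -/
def ww (β : Fin b → Fin n) (v : Fin n →₀ ℕ) : ℕ := ∑ k₀ ∈ Finset.range b, tl β v k₀

/-- total mass of an exponent vector. -/
def tot (v : Fin n →₀ ℕ) : ℕ := ∑ x : Fin n, v x

variable {β : Fin b → Fin n}

lemma ee_apply (hβ : Function.Injective β) (k : Fin b) : ee β (β k) = (k : ℕ) + 2 := by
  classical
  rw [ee, Finsupp.finset_sum_apply, Finset.sum_eq_single k]
  · simp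
  · intro k' _ hk'
    rw [Finsupp.single_apply, if_neg (fun h => hk' (hβ h))]
  · simp

lemma ee_apply_off {x : Fin n} (hx : ∀ k, β k ≠ x) : ee β x = 0 := by
  rw [ee, Finsupp.finset_sum_apply]
  exact Finset.sum_eq_zero fun k _ => by
    rw [Finsupp.single_apply, if_neg (hx k)]

lemma mm_apply (i x : Fin n) : mm β i x = (if i = x then 1 else 0) + ee β x := by
  rw [mm, Finsupp.add_apply, Finsupp.single_apply]

lemma tl_add (v w : Fin n →₀ ℕ) (k₀ : ℕ) :
    tl β (v + w) k₀ = tl β v k₀ + tl β w k₀ := by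
  simp [tl, Finsupp.add_apply, Finset.sum_add_distrib]

lemma ww_add (v w : Fin n →₀ ℕ) : ww β (v + w) = ww β v + ww β w := by
  simp [ww, tl_add, Finset.sum_add_distrib]

lemma ww_zero : ww β 0 = 0 := by simp [ww, tl]

lemma ww_smul (c : ℕ) (v : Fin n →₀ ℕ) : ww β (c • v) = c * ww β v := by
  simp [ww, tl, Finsupp.smul_apply, smul_eq_mul, Finset.mul_sum]

lemma ww_finset_sum {ι : Type*} (s : Finset ι) (v : ι → Fin n →₀ ℕ) :
    ww β (∑ i ∈ s, v i) = ∑ i ∈ s, ww β (v i) := by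
  classical
  induction s using Finset.cons_induction with
  | empty => simp [ww_zero]
  | cons i s hi ih => rw [Finset.sum_cons, Finset.sum_cons, ww_add, ih]

lemma tot_mapDomain (g : Equiv.Perm (Fin n)) (v : Fin n →₀ ℕ) :
    tot (Finsupp.mapDomain ⇑g v) = tot v := by
  rw [tot, tot]
  simp only [Finsupp.mapDomain_equiv_apply]
  exact g.symm.sum_comp _

lemma tot_ee_eq (hβ : Function.Injective β) : tot (ee β) = ∑ k : Fin b, ((k : ℕ) + 2) := by
  rw [tot]
  simp only [ee, Finsupp.finset_sum_apply]
  rw [Finset.sum_comm]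
  refine Finset.sum_congr rfl fun k _ => ?_
  simp only [Finsupp.single_apply]
  rw [Finset.sum_ite_eq]
  simp

lemma tot_mm (hβ : Function.Injective β) (i : Fin n) :
    tot (mm β i) = 1 + tot (ee β) := by
  rw [tot]
  simp only [mm_apply]
  rw [Finset.sum_add_distrib]
  congr 1
  simp

/-- the mapped exponent vector -/
def vg (β : Fin b → Fin n) (g : Equiv.Perm (Fin n)) (i : Fin n) : Fin n →₀ ℕ :=
  Finsupp.mapDomain ⇑g (mm β i)

lemma vg_apply (g : Equiv.Perm (Fin n)) (i x : Fin n) :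
    vg β g i x = mm β i (g.symm x) := Finsupp.mapDomain_equiv_apply _ _

lemma vg_one (i : Fin n) : vg β 1 i = mm β i := by
  simp [vg, Finsupp.mapDomain_id]

lemma tl_le (hβ : Function.Injective β) (g : Equiv.Perm (Fin n)) (i : Fin n) (k₀ : ℕ) :
    tl β (vg β g i) k₀ ≤ tl β (mm β i) k₀ := by
  classical
  set K := Finset.univ.filter (fun k : Fin b => k₀ ≤ (k : ℕ)) with hK
  have hginj : Function.Injective (fun k : Fin b => g.symm (β k)) :=
    fun a a' h => hβ (g.symm.injective h)
  set S := K.image (fun k => g.symm (β k)) with hS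
  set S' := K.image β with hS'
  have hLHS : tl β (vg β g i) k₀ = ∑ x ∈ S, mm β i x := by
    rw [hS, Finset.sum_image (fun a _ a' _ h => hginj h)]
    exact Finset.sum_congr rfl fun k _ => vg_apply g i (β k)
  have hRHS : tl β (mm β i) k₀ = ∑ x ∈ S', mm β i x := by
    rw [hS', Finset.sum_image (fun a _ a' _ h => hβ h)]
    rfl
  rw [hLHS, hRHS]
  have hcards : (S \ S').card = (S' \ S).card := by
    apply Finset.card_sdiff_comm
    rw [hS, hS', Finset.card_image_of_injective _ hginj, Finset.card_image_of_injective _ hβ]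
  have h1 : ∀ x ∈ S \ S', mm β i x ≤ k₀ + 2 := by
    intro x hx
    obtain ⟨hxS, hxS'⟩ := Finset.mem_sdiff.1 hx
    rw [mm_apply]
    by_cases hr : ∃ k, β k = x
    · obtain ⟨k, rfl⟩ := hr
      have hkK : k ∉ K := fun hk => hxS' (Finset.mem_image_of_mem β hk)
      rw [hK] at hkK
      simp only [Finset.mem_filter, Finset.mem_univ, true_and, not_le] at hkK
      rw [ee_apply hβ]
      have : (k : ℕ) + 2 ≤ k₀ + 1 := by omega
      split <;> omega
    · push_neg at hr
      rw [ee_apply_off hr]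
      split <;> omega
  have h2 : ∀ y ∈ S' \ S, k₀ + 2 ≤ mm β i y := by
    intro y hy
    obtain ⟨hyS', _⟩ := Finset.mem_sdiff.1 hy
    rw [hS'] at hyS'
    obtain ⟨k, hk, rfl⟩ := Finset.mem_image.1 hyS'
    rw [hK] at hk
    simp only [Finset.mem_filter, Finset.mem_univ, true_and] at hk
    rw [mm_apply, ee_apply hβ]
    split <;> omega
  calc ∑ x ∈ S, mm β i x
      = ∑ x ∈ S ∩ S', mm β i x + ∑ x ∈ S \ S', mm β i x :=
        (Finset.sum_inter_add_sum_sdiff S S' _).symm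
    _ ≤ ∑ x ∈ S ∩ S', mm β i x + (S \ S').card * (k₀ + 2) := by
        gcongr
        simpa [smul_eq_mul] using Finset.sum_le_card_nsmul (S \ S') _ (k₀ + 2) h1
    _ = ∑ x ∈ S' ∩ S, mm β i x + (S' \ S).card * (k₀ + 2) := by
        rw [Finset.inter_comm, hcards]
    _ ≤ ∑ x ∈ S' ∩ S, mm β i x + ∑ x ∈ S' \ S, mm β i x := by
        gcongr
        simpa [smul_eq_mul] using Finset.card_nsmul_le_sum (S' \ S) _ (k₀ + 2) h2
    _ = ∑ x ∈ S', mm β i x := Finset.sum_inter_add_sum_sdiff S' S _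

lemma ww_le (hβ : Function.Injective β) (g : Equiv.Perm (Fin n)) (i : Fin n) :
    ww β (vg β g i) ≤ ww β (mm β i) :=
  Finset.sum_le_sum fun k₀ _ => tl_le hβ g i k₀

lemma tl_eq_of_ww_eq (hβ : Function.Injective β) (g : Equiv.Perm (Fin n)) (i : Fin n)
    (h : ww β (vg β g i) = ww β (mm β i)) (k₀ : ℕ) :
    tl β (vg β g i) k₀ = tl β (mm β i) k₀ := by
  by_cases hk₀ : k₀ < b
  · exact (Finset.sum_eq_sum_iff_of_le (fun k _ => tl_le hβ g i k)).1 h k₀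
      (Finset.mem_range.2 hk₀)
  · have he : Finset.univ.filter (fun k : Fin b => k₀ ≤ (k : ℕ)) = ∅ := by
      ext k
      simp only [Finset.mem_filter, Finset.mem_univ, true_and, Finset.notMem_empty, iff_false,
        not_le]
      exact lt_of_lt_of_le k.isLt (le_of_not_gt hk₀)
    unfold tl
    rw [he]
    simp

lemma tl_succ (v : Fin n →₀ ℕ) (k₀ : ℕ) (hk₀ : k₀ < b) :
    tl β v k₀ = tl β v (k₀ + 1) + v (β ⟨k₀, hk₀⟩) := by
  classical
  rw [tl, ← Finset.sum_filter_add_sum_filter_not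
      (Finset.univ.filter fun k : Fin b => k₀ ≤ (k : ℕ)) (fun k => k₀ + 1 ≤ (k : ℕ))]
  congr 1
  · rw [Finset.filter_filter]
    apply Finset.sum_congr _ (fun _ _ => rfl)
    apply Finset.filter_congr
    intro k _
    omega
  · rw [Finset.filter_filter]
    have : (Finset.univ.filter fun k : Fin b => k₀ ≤ (k : ℕ) ∧ ¬ k₀ + 1 ≤ (k : ℕ))
        = {(⟨k₀, hk₀⟩ : Fin b)} := by
      ext k
      simp only [Finset.mem_filter, Finset.mem_univ, true_and, Finset.mem_singleton,
        Fin.ext_iff]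
      omega
    rw [this, Finset.sum_singleton]

lemma digit_eq (hβ : Function.Injective β) (g : Equiv.Perm (Fin n)) (i : Fin n)
    (h : ww β (vg β g i) = ww β (mm β i)) (k : Fin b) :
    vg β g i (β k) = mm β i (β k) := by
  have h1 := tl_succ (β := β) (vg β g i) k k.isLt
  have h2 := tl_succ (β := β) (mm β i) k k.isLt
  have e1 := tl_eq_of_ww_eq hβ g i h k
  have e2 := tl_eq_of_ww_eq hβ g i h ((k : ℕ) + 1)
  rw [Fin.eta] at h1 h2
  omega

lemma key_eq (hβ : Function.Injective β) (g : Equiv.Perm (Fin n)) (i : Fin n)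
    (h : ww β (vg β g i) = ww β (mm β i)) :
    vg β g i = mm β i ∨ ∀ k, g (β k) = β k := by
  classical
  have hd : ∀ k : Fin b, vg β g i (β k) = mm β i (β k) := digit_eq hβ g i h
  by_cases hi : ∃ j, β j = i
  · left
    apply Finsupp.ext
    intro x
    by_cases hx : ∃ k, β k = x
    · obtain ⟨k, rfl⟩ := hx; exact hd k
    · push_neg at hx
      obtain ⟨j, hj⟩ := hi
      have hmm0 : ∀ y : Fin n, (∀ k, β k ≠ y) → mm β i y = 0 := by
        intro y hy
        rw [mm_apply, ee_apply_off hy, if_neg (fun hiy => hy j (hj.trans hiy))]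
      -- sums over base image agree, totals agree, so off-base part of vg is 0
      set Bs := Finset.univ.image β with hBs
      have hsum_base : ∑ x ∈ Bs, vg β g i x = ∑ x ∈ Bs, mm β i x := by
        rw [hBs, Finset.sum_image (fun a _ a' _ hh => hβ hh),
          Finset.sum_image (fun a _ a' _ hh => hβ hh)]
        exact Finset.sum_congr rfl fun k _ => hd k
      have htot : ∑ x : Fin n, vg β g i x = ∑ x : Fin n, mm β i x := tot_mapDomain g (mm β i)
      have hsplit1 : ∑ x ∈ Bs, vg β g i x + ∑ x ∈ Bsᶜ, vg β g i x = ∑ x : Fin n, vg β g i x :=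
        Finset.sum_add_sum_compl Bs _
      have hsplit2 : ∑ x ∈ Bs, mm β i x + ∑ x ∈ Bsᶜ, mm β i x = ∑ x : Fin n, mm β i x :=
        Finset.sum_add_sum_compl Bs _
      have hzero2 : ∑ x ∈ Bsᶜ, mm β i x = 0 := by
        apply Finset.sum_eq_zero
        intro y hy
        apply hmm0
        intro k hk
        rw [Finset.mem_compl, hBs] at hy
        exact hy (hk ▸ Finset.mem_image_of_mem β (Finset.mem_univ k))
      have hzero1 : ∑ x ∈ Bsᶜ, vg β g i x = 0 := by omega
      have hxBs : x ∈ Bsᶜ := by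
        rw [Finset.mem_compl, hBs]
        intro hmem
        obtain ⟨k, _, hk⟩ := Finset.mem_image.1 hmem
        exact hx k hk
      have := (Finset.sum_eq_zero_iff).1 hzero1 x hxBs
      rw [this, hmm0 x hx]
  · right
    push_neg at hi
    intro k
    have hdk := hd k
    rw [vg_apply] at hdk
    have hR : mm β i (β k) = (k : ℕ) + 2 := by
      rw [mm_apply, ee_apply hβ, if_neg (fun hh => hi k hh.symm)]
      omega
    rw [hR] at hdk
    by_cases hr : ∃ k', β k' = g.symm (β k)
    · obtain ⟨k', hk'⟩ := hr
      have hL : mm β i (g.symm (β k)) = (k' : ℕ) + 2 := by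
        rw [← hk', mm_apply, ee_apply hβ, if_neg (fun hh => hi k' hh.symm)]
        omega
      rw [hL] at hdk
      have hkk : k' = k := Fin.ext (by omega)
      subst hkk
      have h2 : g.symm (β k') = β k' := hk'.symm
      rw [Equiv.symm_apply_eq] at h2
      exact h2.symm
    · exfalso
      push_neg at hr
      have hL : mm β i (g.symm (β k)) ≤ 1 := by
        rw [mm_apply, ee_apply_off hr]
        split <;> omega
      omega


lemma tot_add (v w : Fin n →₀ ℕ) : tot (v + w) = tot v + tot w := by
  simp [tot, Finsupp.add_apply, Finset.sum_add_distrib]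

lemma tot_zero : tot (0 : Fin n →₀ ℕ) = 0 := by simp [tot]

lemma tot_smul (c : ℕ) (v : Fin n →₀ ℕ) : tot (c • v) = c * tot v := by
  simp [tot, Finsupp.smul_apply, smul_eq_mul, Finset.mul_sum]

lemma tot_finset_sum {ι : Type*} (s : Finset ι) (v : ι → Fin n →₀ ℕ) :
    tot (∑ i ∈ s, v i) = ∑ i ∈ s, tot (v i) := by
  classical
  induction s using Finset.cons_induction with
  | empty => simp [tot_zero]
  | cons i s hi ih => rw [Finset.sum_cons, Finset.sum_cons, tot_add, ih]

lemma phi_eq (α : Fin n →₀ ℕ) :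
    ∑ i : Fin n, α i • mm β i = α + (∑ i : Fin n, α i) • ee β := by
  have h1 : ∀ i : Fin n, α i • mm β i = Finsupp.single i (α i) + α i • ee β := by
    intro i
    rw [mm, smul_add, Finsupp.smul_single, smul_eq_mul, mul_one]
  rw [Finset.sum_congr rfl fun i _ => h1 i, Finset.sum_add_distrib,
    Finsupp.univ_sum_single, ← Finset.sum_smul]

lemma phi_inj (hβ : Function.Injective β) {α α' : Fin n →₀ ℕ}
    (h : ∑ i : Fin n, α i • mm β i = ∑ i : Fin n, α' i • mm β i) : α = α' := by
  have htot := congrArg tot h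
  rw [tot_finset_sum, tot_finset_sum] at htot
  have htot' : (∑ i : Fin n, α i) * (1 + tot (ee β))
      = (∑ i : Fin n, α' i) * (1 + tot (ee β)) := by
    calc (∑ i : Fin n, α i) * (1 + tot (ee β))
        = ∑ i : Fin n, α i * (1 + tot (ee β)) := Finset.sum_mul _ _ _
      _ = ∑ i : Fin n, tot (α i • mm β i) := by
          refine Finset.sum_congr rfl fun i _ => ?_
          rw [tot_smul, tot_mm hβ]
      _ = ∑ i : Fin n, tot (α' i • mm β i) := htot
      _ = ∑ i : Fin n, α' i * (1 + tot (ee β)) := by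
          refine Finset.sum_congr rfl fun i _ => ?_
          rw [tot_smul, tot_mm hβ]
      _ = (∑ i : Fin n, α' i) * (1 + tot (ee β)) := (Finset.sum_mul _ _ _).symm
  have hsum : (∑ i : Fin n, α i) = ∑ i : Fin n, α' i :=
    Nat.eq_of_mul_eq_mul_right (by omega) htot'
  rw [phi_eq, phi_eq, hsum] at h
  exact add_right_cancel h

/-! ### Polynomial part -/

variable (β)

def NN (G : Subgroup (Equiv.Perm (Fin n))) (i : Fin n) : ℕ :=
  (Finset.univ.filter
    (fun g : G => vg β (g : Equiv.Perm (Fin n)) i = mm β i)).card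

def ff (G : Subgroup (Equiv.Perm (Fin n))) : Fin n → MvPolynomial (Fin n) ℤ := fun i =>
  ∑ g : G, MvPolynomial.monomial (vg β (g : Equiv.Perm (Fin n)) i) (1 : ℤ)

def FF (G : Subgroup (Equiv.Perm (Fin n))) : Fin n → MvPolynomial (Fin n) ℚ := fun i =>
  ∑ g : G, MvPolynomial.monomial (vg β (g : Equiv.Perm (Fin n)) i) (1 : ℚ)

/-- support weight bounds -/
def SLe (a : ℕ) (P : MvPolynomial (Fin n) ℚ) : Prop := ∀ μ ∈ P.support, ww β μ ≤ a

def SLt (a : ℕ) (P : MvPolynomial (Fin n) ℚ) : Prop := ∀ μ ∈ P.support, ww β μ < a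

variable {β}

lemma SLe_mul {a c : ℕ} {P Q : MvPolynomial (Fin n) ℚ} (hP : SLe β a P) (hQ : SLe β c Q) :
    SLe β (a + c) (P * Q) := by
  intro μ hμ
  classical
  have := MvPolynomial.support_mul P Q hμ
  rw [Finset.mem_add] at this
  obtain ⟨μ₁, hμ₁, μ₂, hμ₂, rfl⟩ := this
  rw [ww_add]
  exact Nat.add_le_add (hP μ₁ hμ₁) (hQ μ₂ hμ₂)

lemma SLe_mul_SLt {a c : ℕ} {P Q : MvPolynomial (Fin n) ℚ} (hP : SLe β a P) (hQ : SLt β c Q) :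
    SLt β (a + c) (P * Q) := by
  intro μ hμ
  classical
  have := MvPolynomial.support_mul P Q hμ
  rw [Finset.mem_add] at this
  obtain ⟨μ₁, hμ₁, μ₂, hμ₂, rfl⟩ := this
  rw [ww_add]
  exact Nat.add_lt_add_of_le_of_lt (hP μ₁ hμ₁) (hQ μ₂ hμ₂)

lemma SLt_mul_SLe {a c : ℕ} {P Q : MvPolynomial (Fin n) ℚ} (hP : SLt β a P) (hQ : SLe β c Q) :
    SLt β (a + c) (P * Q) := by
  intro μ hμ
  classical
  have := MvPolynomial.support_mul P Q hμ
  rw [Finset.mem_add] at this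
  obtain ⟨μ₁, hμ₁, μ₂, hμ₂, rfl⟩ := this
  rw [ww_add]
  exact Nat.add_lt_add_of_lt_of_le (hP μ₁ hμ₁) (hQ μ₂ hμ₂)

lemma SLt_add {a : ℕ} {P Q : MvPolynomial (Fin n) ℚ} (hP : SLt β a P) (hQ : SLt β a Q) :
    SLt β a (P + Q) := by
  intro μ hμ
  classical
  rcases Finset.mem_union.1 (MvPolynomial.support_add hμ) with h | h
  · exact hP μ h
  · exact hQ μ h

lemma SLe_monomial (u : Fin n →₀ ℕ) (c : ℚ) : SLe β (ww β u) (MvPolynomial.monomial u c) := by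
  intro μ hμ
  classical
  have := MvPolynomial.support_monomial_subset hμ
  rw [Finset.mem_singleton] at this
  subst this
  exact le_refl _

section WithG

variable (G : Subgroup (Equiv.Perm (Fin n)))
variable (hβ : Function.Injective β)
variable (hG : ∀ g : Equiv.Perm (Fin n), g ∈ G → (∀ k, g (β k) = β k) → g = 1)

include hβ hG

lemma vg_lt_of_ne (g : G) (i : Fin n) (hne : vg β (g : Equiv.Perm (Fin n)) i ≠ mm β i) :
    ww β (vg β (g : Equiv.Perm (Fin n)) i) < ww β (mm β i) := by
  rcases lt_or_eq_of_le (ww_le hβ (g : Equiv.Perm (Fin n)) i) with h | h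
  · exact h
  · exfalso
    rcases key_eq hβ (g : Equiv.Perm (Fin n)) i h with h' | h'
    · exact hne h'
    · have : (g : Equiv.Perm (Fin n)) = 1 := hG _ g.2 h'
      rw [this, vg_one] at hne
      exact hne rfl

lemma FF_decomp (i : Fin n) :
    ∃ E, FF β G i = MvPolynomial.monomial (mm β i) ((NN β G i : ℚ)) + E ∧
      SLt β (ww β (mm β i)) E := by
  classical
  refine ⟨∑ g ∈ Finset.univ.filter
      (fun g : G => ¬ vg β (g : Equiv.Perm (Fin n)) i = mm β i),
      MvPolynomial.monomial (vg β (g : Equiv.Perm (Fin n)) i) (1 : ℚ), ?_, ?_⟩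
  · rw [FF, ← Finset.sum_filter_add_sum_filter_not Finset.univ
      (fun g : G => vg β (g : Equiv.Perm (Fin n)) i = mm β i)]
    congr 1
    rw [Finset.sum_congr rfl (fun g hg => by
      rw [(Finset.mem_filter.1 hg).2]), Finset.sum_const, NN, MvPolynomial.smul_monomial]
    congr 1
    simp
  · intro μ hμ
    classical
    have := MvPolynomial.support_sum hμ
    rw [Finset.mem_biUnion] at this
    obtain ⟨g, hg, hμg⟩ := this
    have hgne := (Finset.mem_filter.1 hg).2
    have := MvPolynomial.support_monomial_subset hμg
    rw [Finset.mem_singleton] at this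
    subst this
    exact vg_lt_of_ne G hβ hG g i hgne

lemma pow_decomp (i : Fin n) (a : ℕ) :
    ∃ E, (FF β G i) ^ a =
      MvPolynomial.monomial (a • mm β i) ((NN β G i : ℚ) ^ a) + E ∧
      SLt β (a * ww β (mm β i)) E := by
  classical
  induction a with
  | zero =>
    refine ⟨0, by simp, ?_⟩
    intro μ hμ
    simp at hμ
  | succ a ih =>
    obtain ⟨E, hE, hEs⟩ := ih
    obtain ⟨E', hE', hE's⟩ := FF_decomp G hβ hG i
    refine ⟨MvPolynomial.monomial (a • mm β i) ((NN β G i : ℚ) ^ a) * E' +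
      E * FF β G i, ?_, ?_⟩
    · rw [pow_succ, hE, hE', add_mul, mul_add]
      rw [MvPolynomial.monomial_mul]
      rw [succ_nsmul, pow_succ]
      ring
    · apply SLt_add
      · have := SLe_mul_SLt (SLe_monomial (β := β) (a • mm β i) ((NN β G i : ℚ) ^ a)) hE's
        rw [ww_smul] at this
        have heq : a * ww β (mm β i) + ww β (mm β i) = (a+1) * ww β (mm β i) := by ring
        rw [heq] at this
        exact this
      · have hFFle : SLe β (ww β (mm β i)) (FF β G i) := by
          intro μ hμ
          have := MvPolynomial.support_sum hμ
          rw [Finset.mem_biUnion] at this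
          obtain ⟨g, _, hμg⟩ := this
          have := MvPolynomial.support_monomial_subset hμg
          rw [Finset.mem_singleton] at this
          subst this
          exact ww_le hβ _ i
        have := SLt_mul_SLe hEs hFFle
        have heq : a * ww β (mm β i) + ww β (mm β i) = (a+1) * ww β (mm β i) := by ring
        rw [heq] at this
        exact this

lemma prod_decomp (α : Fin n →₀ ℕ) (s : Finset (Fin n)) :
    ∃ E, ∏ i ∈ s, (FF β G i) ^ (α i) =
      MvPolynomial.monomial (∑ i ∈ s, α i • mm β i) (∏ i ∈ s, (NN β G i : ℚ) ^ (α i)) + E ∧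
      SLt β (∑ i ∈ s, α i * ww β (mm β i)) E := by
  classical
  induction s using Finset.cons_induction with
  | empty =>
    refine ⟨0, by simp, ?_⟩
    intro μ hμ
    simp at hμ
  | cons j s hj ih =>
    obtain ⟨E, hE, hEs⟩ := ih
    obtain ⟨E', hE', hE's⟩ := pow_decomp G hβ hG j (α j)
    rw [Finset.prod_cons, Finset.sum_cons, Finset.sum_cons, Finset.prod_cons]
    refine ⟨E' * (MvPolynomial.monomial (∑ i ∈ s, α i • mm β i)
        (∏ i ∈ s, (NN β G i : ℚ) ^ (α i)) + E) +
      MvPolynomial.monomial ((α j) • mm β j) ((NN β G j : ℚ) ^ (α j)) * E, ?_, ?_⟩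
    · rw [hE', hE, add_mul, mul_add, MvPolynomial.monomial_mul]
      ring
    · apply SLt_add
      · have hrest : SLe β (∑ i ∈ s, α i * ww β (mm β i))
            (MvPolynomial.monomial (∑ i ∈ s, α i • mm β i)
              (∏ i ∈ s, (NN β G i : ℚ) ^ (α i)) + E) := by
          intro μ hμ
          classical
          rcases Finset.mem_union.1 (MvPolynomial.support_add hμ) with h | h
          · have := MvPolynomial.support_monomial_subset h
            rw [Finset.mem_singleton] at this
            subst this
            rw [ww_finset_sum]
            apply le_of_eq
            exact Finset.sum_congr rfl fun i _ => ww_smul _ _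
          · exact le_of_lt (hEs μ h)
        exact SLt_mul_SLe hE's hrest
      · have := SLe_mul_SLt (SLe_monomial (β := β) ((α j) • mm β j)
          ((NN β G j : ℚ) ^ (α j))) hEs
        rw [ww_smul] at this
        exact this

lemma NN_pos (i : Fin n) : 0 < NN β G i := by
  classical
  rw [NN]
  apply Finset.card_pos.2
  refine ⟨1, ?_⟩
  rw [Finset.mem_filter]
  refine ⟨Finset.mem_univ _, ?_⟩
  have h1 : ((1 : G) : Equiv.Perm (Fin n)) = 1 := by simp
  rw [h1, vg_one]

lemma FF_indep : AlgebraicIndependent ℚ (FF β G) := by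
  classical
  rw [algebraicIndependent_iff]
  intro p hp
  by_contra hp0
  have hsupp : p.support.Nonempty :=
    Finset.nonempty_iff_ne_empty.2 (fun h => hp0 (MvPolynomial.support_eq_empty.1 h))
  obtain ⟨α₀, hα₀mem, hα₀max⟩ := Finset.exists_max_image p.support
    (fun α => ∑ i : Fin n, α i * ww β (mm β i)) hsupp
  have hexp : MvPolynomial.aeval (FF β G) p =
      ∑ α ∈ p.support, MvPolynomial.C (MvPolynomial.coeff α p) *
        ∏ i : Fin n, (FF β G i) ^ (α i) := by
    conv_lhs => rw [p.as_sum]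
    rw [map_sum]
    refine Finset.sum_congr rfl fun α hα => ?_
    rw [MvPolynomial.aeval_monomial, MvPolynomial.algebraMap_eq]
    congr 1
    exact Finset.prod_subset (Finset.subset_univ _) (fun i _ hi => by
      simp [Finsupp.notMem_support_iff.1 hi])
  have hwφ : ∀ α : Fin n →₀ ℕ, ww β (∑ i : Fin n, α i • mm β i)
      = ∑ i : Fin n, α i * ww β (mm β i) := by
    intro α
    rw [ww_finset_sum]
    exact Finset.sum_congr rfl fun i _ => ww_smul _ _
  have hcoeffprod : ∀ α ∈ p.support,
      MvPolynomial.coeff (∑ i : Fin n, α₀ i • mm β i) (∏ i : Fin n, (FF β G i) ^ (α i)) =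
        if α = α₀ then ∏ i : Fin n, (NN β G i : ℚ) ^ (α₀ i) else 0 := by
    intro α hα
    obtain ⟨E, hE, hEs⟩ := prod_decomp G hβ hG α Finset.univ
    rw [hE, MvPolynomial.coeff_add, MvPolynomial.coeff_monomial]
    have hcoeffE : MvPolynomial.coeff (∑ i : Fin n, α₀ i • mm β i) E = 0 := by
      by_contra hne
      have hmem := MvPolynomial.mem_support_iff.2 hne
      have hlt := hEs _ hmem
      rw [hwφ α₀] at hlt
      exact absurd hlt (not_lt.2 (hα₀max α hα))
    rw [hcoeffE, add_zero]
    by_cases heq : (∑ i : Fin n, α i • mm β i) = ∑ i : Fin n, α₀ i • mm β i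
    · have hαα : α = α₀ := phi_inj hβ heq
      rw [if_pos heq, if_pos hαα, hαα]
    · rw [if_neg heq, if_neg (fun h => heq (by rw [h]))]
  have hc : MvPolynomial.coeff (∑ i : Fin n, α₀ i • mm β i) (MvPolynomial.aeval (FF β G) p) =
      MvPolynomial.coeff α₀ p * ∏ i : Fin n, (NN β G i : ℚ) ^ (α₀ i) := by
    rw [hexp, MvPolynomial.coeff_sum]
    rw [Finset.sum_congr rfl (fun α hα => by
      rw [MvPolynomial.coeff_C_mul, hcoeffprod α hα])]
    rw [Finset.sum_eq_single α₀]
    · rw [if_pos rfl]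
    · intro α hα hne
      rw [if_neg hne, mul_zero]
    · intro h
      exact absurd hα₀mem h
  rw [hp, MvPolynomial.coeff_zero] at hc
  have hNN : ∀ i : Fin n, ((NN β G i : ℚ)) ^ (α₀ i) ≠ 0 :=
    fun i => pow_ne_zero _ (Nat.cast_ne_zero.2 (NN_pos G hβ hG i).ne')
  have hprodne : (∏ i : Fin n, (NN β G i : ℚ) ^ (α₀ i)) ≠ 0 :=
    Finset.prod_ne_zero_iff.2 fun i _ => hNN i
  exact (mul_ne_zero (MvPolynomial.mem_support_iff.1 hα₀mem) hprodne) hc.symm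

end WithG

end BaseInvAux

/-- **Invariants from a base** (Corollary 4.6): if a permutation group `G ≤ S_n` admits a
base of size `b` (a subset of `{1,…,n}` of cardinality `b` with trivial pointwise
stabilizer in `G`), then there exist `n` algebraically independent `G`-invariant polynomials
`f_1,…,f_n ∈ ℤ[x_1,…,x_n]` with `max_i deg f_i ≤ (b+1)(b+2)/2`. -/
theorem base_invariants (n b : ℕ) (G : Subgroup (Equiv.Perm (Fin n)))
    (B : Finset (Fin n)) (hcard : B.card = b)
    (hbase : ∀ g ∈ G, (∀ x ∈ B, g x = x) → g = 1) :
    ∃ f : Fin n → MvPolynomial (Fin n) ℤ,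
      (∀ i, ∀ g ∈ G, MvPolynomial.rename ⇑g (f i) = f i) ∧
      AlgebraicIndependent ℚ (fun i => MvPolynomial.map (Int.castRingHom ℚ) (f i)) ∧
      ∀ i, (f i).totalDegree ≤ (b + 1) * (b + 2) / 2 := by
  classical
  set β : Fin b → Fin n := fun k => ((B.orderIsoOfFin hcard k : B) : Fin n) with hβdef
  have hβ : Function.Injective β := by
    intro a a' h
    exact (B.orderIsoOfFin hcard).injective (Subtype.coe_injective h)
  have hG : ∀ g ∈ G, (∀ k, g (β k) = β k) → g = 1 := by
    intro g hg hfix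
    apply hbase g hg
    intro x hx
    have hxx : β ((B.orderIsoOfFin hcard).symm ⟨x, hx⟩) = x := by
      rw [hβdef]
      simp
    rw [← hxx]
    exact hfix _
  refine ⟨BaseInvAux.ff β G, ?_, ?_, ?_⟩
  · -- invariance
    intro i g hg
    rw [BaseInvAux.ff, map_sum]
    simp only [MvPolynomial.rename_monomial]
    refine Fintype.sum_equiv (Equiv.mulLeft (⟨g, hg⟩ : G)) _ _ ?_
    intro x
    have hco : (⇑g ∘ ⇑((x : G) : Equiv.Perm (Fin n)))
        = ⇑(((Equiv.mulLeft (⟨g, hg⟩ : G) x : G) : Equiv.Perm (Fin n))) := rfl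
    congr 1
    rw [BaseInvAux.vg, BaseInvAux.vg, ← Finsupp.mapDomain_comp, hco]
  · -- algebraic independence
    have hFF : (fun i => MvPolynomial.map (Int.castRingHom ℚ) (BaseInvAux.ff β G i))
        = BaseInvAux.FF β G := by
      funext i
      rw [BaseInvAux.ff, BaseInvAux.FF, map_sum]
      refine Finset.sum_congr rfl fun g _ => ?_
      rw [MvPolynomial.map_monomial]
      norm_num
    rw [hFF]
    exact BaseInvAux.FF_indep G hβ hG
  · -- degrees
    intro i
    rw [BaseInvAux.ff]
    refine le_trans (MvPolynomial.totalDegree_finset_sum _ _) ?_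
    apply Finset.sup_le
    intro g _
    rw [MvPolynomial.totalDegree_monomial _ one_ne_zero]
    have h1 : (BaseInvAux.vg β (g : Equiv.Perm (Fin n)) i).sum (fun _ e => e)
        = (BaseInvAux.mm β i).sum (fun _ e => e) :=
      Finsupp.sum_mapDomain_index (fun _ => rfl) (fun _ _ _ => rfl)
    have h2 : (BaseInvAux.mm β i).sum (fun _ e => e) = BaseInvAux.tot (BaseInvAux.mm β i) :=
      Finsupp.sum_fintype _ _ (fun _ => rfl)
    rw [h1, h2, BaseInvAux.tot_mm hβ, BaseInvAux.tot_ee_eq hβ]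
    rw [Fin.sum_univ_eq_sum_range (fun k => k + 2) b]
    have hgauss : ∀ m : ℕ, (1 + ∑ k ∈ Finset.range m, (k + 2)) * 2 = (m + 1) * (m + 2) := by
      intro m
      induction m with
      | zero => simp
      | succ m ih =>
        rw [Finset.sum_range_succ]
        have hh : (1 + (∑ k ∈ Finset.range m, (k + 2) + (m + 2))) * 2
            = (1 + ∑ k ∈ Finset.range m, (k + 2)) * 2 + (m + 2) * 2 := by ring
        rw [hh, ih]
        ring
    rw [Nat.le_div_iff_mul_le (by norm_num : 0 < 2)]
    rw [hgauss b]

end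
end
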